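/- arXiv:1608.05716 — 4 statements merged into one kernel-verified Lean document; each statement's English description precedes it below -/
import Mathlib

section
/- For an integer p ≥ 2, the function a₀(τ) = ((1-τ)/2)^{p+1}·((1+τ)/2)^{p-1}·∫₀^τ ds/((1+s)^p (1-s)^{p+2}) satisfies the ODE (1-τ²)·a₀''(τ) + 2(1-(1-p)τ)·a₀'(τ) + 2p·a₀(τ) = 0 on (-1,1). -/
/-!
`u(τ) = ((1-τ)/2)^(p+1) ((1+τ)/2)^(p-1)` is the regular solution of the Jacobi equation
`(1-τ²) y'' + 2(1-(1-p)τ) y' + 2p y = 0`, and `a₀ = u ∫₀^τ w` is the second solution obtained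
from it by reduction of order: the integrand `w = 1/((1+s)^p (1-s)^(p+2))` is, up to a constant,
`W/u²` for the Wronskian `W = (1-s)^p (1+s)^(p-2)` given by Abel's formula. Writing `u' = u ℓ`
and `w' = w ℓ_w` with rational `ℓ`, `ℓ_w`, both the equation for `u` and Abel's relation
become identities between rational functions.
-/

open Filter Topology Set

theorem reduction_of_order {u u' F g : ℝ → ℝ} {t a b c u'' g' : ℝ}
    (hu : ∀ᶠ s in 𝓝 t, HasDerivAt u (u' s) s) (hu' : HasDerivAt u' u'' t)
    (hF : ∀ᶠ s in 𝓝 t, HasDerivAt F (g s) s) (hg : HasDerivAt g g' t)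
    (hsol : a * u'' + b * u' t + c * u t = 0)
    (habel : a * (2 * u' t * g t + u t * g') + b * u t * g t = 0) :
    a * deriv (deriv fun s => u s * F s) t + b * deriv (fun s => u s * F s) t
      + c * (u t * F t) = 0 := by
  have hderiv : deriv (fun s => u s * F s) =ᶠ[𝓝 t] fun s => u' s * F s + u s * g s := by
    filter_upwards [hu, hF] with s hus hFs
    exact (hus.mul hFs).deriv
  have hderiv₂ : deriv (deriv fun s => u s * F s) t
      = u'' * F t + u' t * g t + (u' t * g t + u t * g') := by
    rw [hderiv.deriv_eq]
    exact ((hu'.mul hF.self_of_nhds).add (hu.self_of_nhds.mul hg)).deriv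
  rw [hderiv₂, hderiv.eq_of_nhds]
  linear_combination F t * hsol + habel

theorem HasDerivAt.pow_eq_mul_logDeriv {f : ℝ → ℝ} {f' x : ℝ} (hf : HasDerivAt f f' x)
    (hx : f x ≠ 0) (n : ℕ) :
    HasDerivAt (fun y => f y ^ n) (f x ^ n * (n * f' / f x)) x := by
  refine (hf.pow n).congr_deriv ?_
  cases n with
  | zero => simp
  | succ k =>
    rw [Nat.add_sub_cancel, pow_succ]
    field_simp

namespace Jacobi

noncomputable def regular (p : ℕ) (t : ℝ) : ℝ := ((1 - t) / 2) ^ (p + 1) * ((1 + t) / 2) ^ (p - 1)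

noncomputable def weight (p : ℕ) (s : ℝ) : ℝ := 1 / ((1 + s) ^ p * (1 - s) ^ (p + 2))

noncomputable def regularLogDeriv (p : ℕ) (t : ℝ) : ℝ := (p - 1) / (1 + t) - (p + 1) / (1 - t)

noncomputable def weightLogDeriv (p : ℕ) (s : ℝ) : ℝ := (p + 2) / (1 - s) - p / (1 + s)

variable {p : ℕ} {t : ℝ}

theorem hasDerivAt_regular (hp : 1 ≤ p) (ht : t ∈ Ioo (-1 : ℝ) 1) :
    HasDerivAt (regular p) (regular p t * regularLogDeriv p t) t := by
  obtain ⟨h₁, h₂⟩ := ht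
  have hminus : (1 : ℝ) - t ≠ 0 := by linarith
  have hplus : (1 : ℝ) + t ≠ 0 := by linarith
  have hA := (((hasDerivAt_id t).const_sub 1).div_const 2).pow_eq_mul_logDeriv (by simpa) (p + 1)
  have hB := (((hasDerivAt_id t).const_add 1).div_const 2).pow_eq_mul_logDeriv (by simpa) (p - 1)
  refine (hA.mul hB).congr_deriv ?_
  simp only [regular, regularLogDeriv, id]
  push_cast [Nat.cast_sub hp]
  field_simp
  ring

theorem hasDerivAt_regularLogDeriv (ht : t ∈ Ioo (-1 : ℝ) 1) :
    HasDerivAt (regularLogDeriv p) (-(p - 1) / (1 + t) ^ 2 - (p + 1) / (1 - t) ^ 2) t := by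
  obtain ⟨h₁, h₂⟩ := ht
  have hplus : (1 : ℝ) + t ≠ 0 := by linarith
  have hminus : (1 : ℝ) - t ≠ 0 := by linarith
  have hP := (hasDerivAt_const t ((p : ℝ) - 1)).fun_div ((hasDerivAt_id t).const_add 1) hplus
  have hM := (hasDerivAt_const t ((p : ℝ) + 1)).fun_div ((hasDerivAt_id t).const_sub 1) hminus
  refine (hP.fun_sub hM).congr_deriv ?_
  simp only [id]
  ring

theorem hasDerivAt_weight (ht : t ∈ Ioo (-1 : ℝ) 1) :
    HasDerivAt (weight p) (weight p t * weightLogDeriv p t) t := by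
  obtain ⟨h₁, h₂⟩ := ht
  have hplus : (1 : ℝ) + t ≠ 0 := by linarith
  have hminus : (1 : ℝ) - t ≠ 0 := by linarith
  have hP := ((hasDerivAt_id t).const_add 1).pow_eq_mul_logDeriv hplus p
  have hM := ((hasDerivAt_id t).const_sub 1).pow_eq_mul_logDeriv hminus (p + 2)
  refine ((hasDerivAt_const t (1 : ℝ)).fun_div (hP.fun_mul hM)
    (by simp [hplus, hminus])).congr_deriv ?_
  simp only [weight, weightLogDeriv, id]
  push_cast
  field_simp
  ring

theorem continuousOn_weight : ContinuousOn (weight p) (Ioo (-1) 1) := by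
  refine continuousOn_const.div (by fun_prop) fun s ⟨h₁, h₂⟩ => ?_
  have : (0 : ℝ) < 1 + s := by linarith
  have : (0 : ℝ) < 1 - s := by linarith
  positivity

theorem hasDerivAt_integral_weight (ht : t ∈ Ioo (-1 : ℝ) 1) :
    HasDerivAt (fun t => ∫ s in (0 : ℝ)..t, weight p s) (weight p t) t := by
  have hsub : uIcc 0 t ⊆ Ioo (-1 : ℝ) 1 := ordConnected_Ioo.uIcc_subset (by norm_num) ht
  exact intervalIntegral.integral_hasDerivAt_right
    (continuousOn_weight.mono hsub).intervalIntegrable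
    (continuousOn_weight.stronglyMeasurableAtFilter isOpen_Ioo t ht)
    (continuousOn_weight.continuousAt (isOpen_Ioo.mem_nhds ht))

theorem regularLogDeriv_riccati (ht : t ∈ Ioo (-1 : ℝ) 1) :
    (1 - t ^ 2) * (regularLogDeriv p t ^ 2 + (-(p - 1) / (1 + t) ^ 2 - (p + 1) / (1 - t) ^ 2))
      + 2 * (1 - (1 - p) * t) * regularLogDeriv p t + 2 * p = 0 := by
  obtain ⟨h₁, h₂⟩ := ht
  have hplus : (1 : ℝ) + t ≠ 0 := by linarith
  have hminus : (1 : ℝ) - t ≠ 0 := by linarith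
  simp only [regularLogDeriv]
  field_simp
  ring

theorem regularLogDeriv_abel (ht : t ∈ Ioo (-1 : ℝ) 1) :
    (1 - t ^ 2) * (2 * regularLogDeriv p t + weightLogDeriv p t) + 2 * (1 - (1 - p) * t) = 0 := by
  obtain ⟨h₁, h₂⟩ := ht
  have hplus : (1 : ℝ) + t ≠ 0 := by linarith
  have hminus : (1 : ℝ) - t ≠ 0 := by linarith
  simp only [regularLogDeriv, weightLogDeriv]
  field_simp
  ring

end Jacobi

open Jacobi

/-- The singular branch
`a₀(τ) = ((1-τ)/2)^(p+1) ((1+τ)/2)^(p-1) ∫₀^τ ds/((1+s)^p (1-s)^(p+2))`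
solves `(1-τ²)a₀'' + 2(1-(1-p)τ)a₀' + 2p a₀ = 0` on `(-1,1)`. -/
theorem jacobi_singular_branch_spin1 (p : ℕ) (hp : 2 ≤ p) :
    ∀ τ ∈ Set.Ioo (-1 : ℝ) 1,
      (1 - τ ^ 2) *
          deriv (deriv (fun t : ℝ => ((1 - t) / 2) ^ (p + 1) * ((1 + t) / 2) ^ (p - 1) *
            ∫ s in (0 : ℝ)..t, 1 / ((1 + s) ^ p * (1 - s) ^ (p + 2)))) τ
        + 2 * (1 - (1 - (p : ℝ)) * τ) *
          deriv (fun t : ℝ => ((1 - t) / 2) ^ (p + 1) * ((1 + t) / 2) ^ (p - 1) *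
            ∫ s in (0 : ℝ)..t, 1 / ((1 + s) ^ p * (1 - s) ^ (p + 2))) τ
        + 2 * (p : ℝ) * (((1 - τ) / 2) ^ (p + 1) * ((1 + τ) / 2) ^ (p - 1) *
            ∫ s in (0 : ℝ)..τ, 1 / ((1 + s) ^ p * (1 - s) ^ (p + 2))) = 0 := by
  intro τ hτ
  have hp₁ : 1 ≤ p := by omega
  have hnear : ∀ᶠ s in 𝓝 τ, s ∈ Ioo (-1 : ℝ) 1 := isOpen_Ioo.mem_nhds hτ
  exact reduction_of_order (u := regular p) (F := fun t => ∫ s in (0 : ℝ)..t, weight p s)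
    (hnear.mono fun s hs => hasDerivAt_regular hp₁ hs)
    ((hasDerivAt_regular hp₁ hτ).mul (hasDerivAt_regularLogDeriv hτ))
    (hnear.mono fun s hs => hasDerivAt_integral_weight hs) (hasDerivAt_weight hτ)
    (by linear_combination regular p τ * regularLogDeriv_riccati hτ)
    (by linear_combination regular p τ * weight p τ * regularLogDeriv_abel hτ)
end

section
/- Let p ≥ 1 and ℓ with 1 ≤ ℓ ≤ p be integers and set λ = √(ℓ(ℓ+1)). Suppose a₀, a₂ : (-1,1) → ℝ are differentiable and satisfy the coupled system: (1+τ)·a₀'(τ) + (λ²(1+τ)/(2p) - (p-1))·a₀(τ) + (λ²(1-τ)/(2p))·a₂(τ) = 0 and (1-τ)·a₂'(τ) - (λ²(1+τ)/(2p))·a₀(τ) - (λ²(1-τ)/(2p) - (p-1))·a₂(τ) = 0. Then a₀ satisfies the decoupled second-order equation (1-τ²)·a₀''(τ) + 2(1-(1-p)τ)·a₀'(τ) + (p+ℓ)(ℓ-p+1)·a₀(τ) = 0. -/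
/-!
Differentiate the first equation once, multiply by `1 - τ`, and eliminate `(1 - τ) a₂'` with
the second equation and `(1 - τ) a₂` with the first one. Differentiating is legitimate because,
away from `τ = -1`, the first equation expresses `a₀'` as a quotient of differentiable functions.
With `c = λ² / (2p)` and `q = p - 1` the resulting constant `p (2c - q)` is
`λ² - p (p - 1) = (p + ℓ)(ℓ - p + 1)`.
-/

open Filter Topology

theorem Int.mul_add_one_nonneg (n : ℤ) : 0 ≤ n * (n + 1) := by
  rcases le_or_gt 0 n with hn | hn
  · positivity
  · exact mul_nonneg_of_nonpos_of_nonpos hn.le (by omega)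

theorem hasDerivAt_of_eventually_mul_eq {f u v : ℝ → ℝ} {u' v' x : ℝ}
    (hf : ∀ᶠ t in 𝓝 x, u t * f t = v t) (hu : HasDerivAt u u' x) (hv : HasDerivAt v v' x)
    (hux : u x ≠ 0) : HasDerivAt f ((v' - u' * f x) / u x) x := by
  have hu_ne : ∀ᶠ t in 𝓝 x, u t ≠ 0 := hu.continuousAt.eventually_ne hux
  have hf_eq : (fun t => v t / u t) =ᶠ[𝓝 x] f := by
    filter_upwards [hf, hu_ne] with t ht hut
    rw [div_eq_iff hut, ← ht, mul_comm]
  have hfx : v x = u x * f x := (hf.self_of_nhds).symm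
  refine ((hv.div hu hux).congr_of_eventuallyEq hf_eq.symm).congr_deriv ?_
  rw [hfx]
  field_simp

theorem decoupled_of_coupled {a₀ a₂ : ℝ → ℝ} {c q τ : ℝ} (hτ : τ ≠ -1)
    (ha₀ : DifferentiableAt ℝ a₀ τ) (ha₂ : DifferentiableAt ℝ a₂ τ)
    (h₀ : ∀ᶠ t in 𝓝 τ,
      (1 + t) * deriv a₀ t + (c * (1 + t) - q) * a₀ t + c * (1 - t) * a₂ t = 0)
    (h₂ : (1 - τ) * deriv a₂ τ - c * (1 + τ) * a₀ τ - (c * (1 - τ) - q) * a₂ τ = 0) :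
    (1 - τ ^ 2) * deriv (deriv a₀) τ + 2 * (1 + q * τ) * deriv a₀ τ
      + (q + 1) * (2 * c - q) * a₀ τ = 0 := by
  have h1τ : 1 + τ ≠ 0 := fun h => hτ (by linarith)
  have hrhs : HasDerivAt (fun t => (q - c * (1 + t)) * a₀ t - c * (1 - t) * a₂ t)
      (-c * a₀ τ + (q - c * (1 + τ)) * deriv a₀ τ
        - (-c * a₂ τ + c * (1 - τ) * deriv a₂ τ)) τ := by
    have hlin₀ : HasDerivAt (fun t : ℝ => q - c * (1 + t)) (-c) τ := by
      simpa using (((hasDerivAt_id τ).const_add 1).const_mul c).const_sub q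
    have hlin₂ : HasDerivAt (fun t : ℝ => c * (1 - t)) (-c) τ := by
      simpa using ((hasDerivAt_id τ).const_sub 1).const_mul c
    exact (hlin₀.mul ha₀.hasDerivAt).sub (hlin₂.mul ha₂.hasDerivAt)
  have hsecond := hasDerivAt_of_eventually_mul_eq (f := deriv a₀) (u := fun t => 1 + t)
    (h₀.mono fun t ht => by linear_combination ht)
    ((hasDerivAt_id τ).const_add 1) hrhs h1τ
  have hcleared : (1 - τ ^ 2) * deriv (deriv a₀) τ
      = (1 - τ) * (-c * a₀ τ + (q - c * (1 + τ)) * deriv a₀ τ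
        - (-c * a₂ τ + c * (1 - τ) * deriv a₂ τ) - deriv a₀ τ) := by
    rw [hsecond.deriv]
    field_simp
    ring
  rw [hcleared]
  linear_combination (q + 1 - c * (1 - τ)) * h₀.self_of_nhds - c * (1 - τ) * h₂

theorem maxwell_decoupling_general (p ℓ : ℤ) (hp : 1 ≤ p)
    (a₀ a₂ : ℝ → ℝ) (hd₀ : Differentiable ℝ a₀) (hd₂ : Differentiable ℝ a₂)
    (h₀ : ∀ τ ∈ Set.Ioo (-1 : ℝ) 1,
      (1 + τ) * deriv a₀ τ
        + ((Real.sqrt ((ℓ : ℝ) * ((ℓ : ℝ) + 1))) ^ 2 * (1 + τ) / (2 * (p : ℝ)) - ((p : ℝ) - 1))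
          * a₀ τ
        + ((Real.sqrt ((ℓ : ℝ) * ((ℓ : ℝ) + 1))) ^ 2 * (1 - τ) / (2 * (p : ℝ))) * a₂ τ = 0)
    (h₂ : ∀ τ ∈ Set.Ioo (-1 : ℝ) 1,
      (1 - τ) * deriv a₂ τ
        - ((Real.sqrt ((ℓ : ℝ) * ((ℓ : ℝ) + 1))) ^ 2 * (1 + τ) / (2 * (p : ℝ))) * a₀ τ
        - ((Real.sqrt ((ℓ : ℝ) * ((ℓ : ℝ) + 1))) ^ 2 * (1 - τ) / (2 * (p : ℝ)) - ((p : ℝ) - 1))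
          * a₂ τ = 0) :
    ∀ τ ∈ Set.Ioo (-1 : ℝ) 1,
      (1 - τ ^ 2) * deriv (deriv a₀) τ + 2 * (1 - (1 - (p : ℝ)) * τ) * deriv a₀ τ
        + ((p : ℝ) + (ℓ : ℝ)) * ((ℓ : ℝ) - (p : ℝ) + 1) * a₀ τ = 0 := by
  intro τ hτ
  have hp₀ : (p : ℝ) ≠ 0 := by exact_mod_cast (show p ≠ 0 by omega)
  have hlam : Real.sqrt ((ℓ : ℝ) * ((ℓ : ℝ) + 1)) ^ 2 = (ℓ : ℝ) * ((ℓ : ℝ) + 1) :=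
    Real.sq_sqrt (by exact_mod_cast Int.mul_add_one_nonneg ℓ)
  have hjacobi := decoupled_of_coupled (a₀ := a₀) (a₂ := a₂)
    (c := Real.sqrt ((ℓ : ℝ) * ((ℓ : ℝ) + 1)) ^ 2 / (2 * (p : ℝ))) (q := (p : ℝ) - 1)
    (ne_of_gt hτ.1) (hd₀ τ) (hd₂ τ)
    (eventually_of_mem (Ioo_mem_nhds hτ.1 hτ.2) fun t ht => by linear_combination h₀ t ht)
    (by linear_combination h₂ τ hτ)
  have hconst : ((p : ℝ) - 1 + 1)
      * (2 * (Real.sqrt ((ℓ : ℝ) * ((ℓ : ℝ) + 1)) ^ 2 / (2 * (p : ℝ))) - ((p : ℝ) - 1))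
      = ((p : ℝ) + (ℓ : ℝ)) * ((ℓ : ℝ) - (p : ℝ) + 1) := by
    rw [hlam]
    field_simp
    ring
  linear_combination hjacobi - a₀ τ * hconst

/-- Decoupling of the first-order coupled transport system for the Maxwell
coefficients `a₀, a₂` into the Jacobi-type second order ODE for `a₀`. -/
theorem maxwell_decoupling (p ℓ : ℤ) (hp : 1 ≤ p) (hℓ : 1 ≤ ℓ) (hℓp : ℓ ≤ p)
    (a₀ a₂ : ℝ → ℝ) (hd₀ : Differentiable ℝ a₀) (hd₂ : Differentiable ℝ a₂)
    (h₀ : ∀ τ ∈ Set.Ioo (-1 : ℝ) 1,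
      (1 + τ) * deriv a₀ τ
        + ((Real.sqrt ((ℓ : ℝ) * ((ℓ : ℝ) + 1))) ^ 2 * (1 + τ) / (2 * (p : ℝ)) - ((p : ℝ) - 1))
          * a₀ τ
        + ((Real.sqrt ((ℓ : ℝ) * ((ℓ : ℝ) + 1))) ^ 2 * (1 - τ) / (2 * (p : ℝ))) * a₂ τ = 0)
    (h₂ : ∀ τ ∈ Set.Ioo (-1 : ℝ) 1,
      (1 - τ) * deriv a₂ τ
        - ((Real.sqrt ((ℓ : ℝ) * ((ℓ : ℝ) + 1))) ^ 2 * (1 + τ) / (2 * (p : ℝ))) * a₀ τ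
        - ((Real.sqrt ((ℓ : ℝ) * ((ℓ : ℝ) + 1))) ^ 2 * (1 - τ) / (2 * (p : ℝ)) - ((p : ℝ) - 1))
          * a₂ τ = 0) :
    ∀ τ ∈ Set.Ioo (-1 : ℝ) 1,
      (1 - τ ^ 2) * deriv (deriv a₀) τ + 2 * (1 - (1 - (p : ℝ)) * τ) * deriv a₀ τ
        + ((p : ℝ) + (ℓ : ℝ)) * ((ℓ : ℝ) - (p : ℝ) + 1) * a₀ τ = 0 :=
  maxwell_decoupling_general p ℓ hp a₀ a₂ hd₀ hd₂ h₀ h₂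
end

section
/- Let p ≥ 2 be an integer and set λ = √(p(p+1)). If a₀(τ) = ((1-τ)/2)^{p+1}((1+τ)/2)^{p-1}·C and a₂(τ) = ((1+τ)/2)^{p+1}((1-τ)/2)^{p-1}·D satisfy the coupled system (1+τ)·a₀' + (λ²(1+τ)/(2p) - (p-1))·a₀ + (λ²(1-τ)/(2p))·a₂ = 0 and (1-τ)·a₂' - (λ²(1+τ)/(2p))·a₀ - (λ²(1-τ)/(2p) - (p-1))·a₂ = 0 on (-1,1), then C = D. -/
/-!
It suffices to look at the first equation at `τ = 0`. There both branches equal `2⁻²ᵖ` times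
their constant, the derivative of `a₀` is `-2 · 2⁻²ᵖ C`, and `λ² / (2p) = (p + 1) / 2`, so the
equation collapses to `(p + 1) 2⁻²ᵖ⁻¹ (D - C) = 0`.
-/

noncomputable def jacobiWeight (m n : ℕ) (τ : ℝ) : ℝ := ((1 - τ) / 2) ^ m * ((1 + τ) / 2) ^ n

lemma jacobiWeight_zero (m n : ℕ) : jacobiWeight m n 0 = 1 / 2 ^ (m + n) := by
  simp [jacobiWeight, pow_add, mul_comm]

lemma natCast_mul_half_pow_pred (m : ℕ) :
    (m : ℝ) * (1 / 2) ^ (m - 1) = 2 * m * (1 / 2) ^ m := by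
  cases m with
  | zero => simp
  | succ m => simp only [Nat.add_sub_cancel, pow_succ]; ring

lemma hasDerivAt_jacobiWeight_zero (m n : ℕ) :
    HasDerivAt (jacobiWeight m n) (((n : ℝ) - m) / 2 ^ (m + n)) 0 := by
  have hminus : HasDerivAt (fun τ : ℝ => (1 - τ) / 2) (-1 / 2) 0 := by
    simpa using ((hasDerivAt_id (0 : ℝ)).const_sub 1).div_const 2
  have hplus : HasDerivAt (fun τ : ℝ => (1 + τ) / 2) (1 / 2) 0 := by
    simpa using ((hasDerivAt_id (0 : ℝ)).const_add 1).div_const 2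
  refine ((hminus.pow m).mul (hplus.pow n)).congr_deriv ?_
  simp only [Pi.pow_apply, sub_zero, add_zero, natCast_mul_half_pow_pred]
  simp only [one_div, inv_pow]
  field_simp
  ring

theorem maxwell_constants_coincide_general (p : ℕ) (hp : 2 ≤ p) (C D : ℝ) (a₀ a₂ : ℝ → ℝ)
    (ha₀ : ∀ τ : ℝ, a₀ τ = ((1 - τ) / 2) ^ (p + 1) * ((1 + τ) / 2) ^ (p - 1) * C)
    (ha₂ : ∀ τ : ℝ, a₂ τ = ((1 + τ) / 2) ^ (p + 1) * ((1 - τ) / 2) ^ (p - 1) * D)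
    (h₀ : ∀ τ ∈ Set.Ioo (-1 : ℝ) 1,
      (1 + τ) * deriv a₀ τ
        + ((Real.sqrt ((p : ℝ) * ((p : ℝ) + 1))) ^ 2 * (1 + τ) / (2 * (p : ℝ)) - ((p : ℝ) - 1))
          * a₀ τ
        + ((Real.sqrt ((p : ℝ) * ((p : ℝ) + 1))) ^ 2 * (1 - τ) / (2 * (p : ℝ))) * a₂ τ = 0) :
    C = D := by
  have hp₀ : (p : ℝ) ≠ 0 := Nat.cast_ne_zero.mpr (by omega)
  have hdeg : (p + 1 : ℕ) + (p - 1 : ℕ) = 2 * p := by omega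
  have hsqrt : √((p : ℝ) * (p + 1)) ^ 2 = p * (p + 1) := Real.sq_sqrt (by positivity)
  have hderiv : deriv a₀ 0 = -2 / 2 ^ (2 * p) * C := by
    have ha₀' : a₀ = fun τ => jacobiWeight (p + 1) (p - 1) τ * C := funext ha₀
    rw [ha₀', ((hasDerivAt_jacobiWeight_zero _ _).mul_const C).deriv, hdeg,
      Nat.cast_sub (by omega : 1 ≤ p)]
    push_cast
    ring
  have hval₀ : a₀ 0 = 1 / 2 ^ (2 * p) * C := by
    rw [ha₀ 0, ← hdeg, ← jacobiWeight_zero, jacobiWeight]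
  have hval₂ : a₂ 0 = 1 / 2 ^ (2 * p) * D := by
    rw [ha₂ 0, ← hdeg, ← jacobiWeight_zero, jacobiWeight, add_zero, sub_zero,
      mul_comm (_ ^ (p + 1))]
  have key := h₀ 0 ⟨by norm_num, by norm_num⟩
  rw [hderiv, hval₀, hval₂, hsqrt] at key
  have hfactor : ((p : ℝ) + 1) / 2 ^ (2 * p + 1) * (D - C) = 0 := by
    field_simp at key ⊢
    linear_combination key
  have hcoeff : ((p : ℝ) + 1) / 2 ^ (2 * p + 1) ≠ 0 := by positivity
  linarith [(mul_eq_zero.mp hfactor).resolve_left hcoeff]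

/-- For the highest harmonic sector `ℓ = p` of the Maxwell field, substituting the
polynomial branches into the coupled first-order system forces `C = D`. -/
theorem maxwell_constants_coincide (p : ℕ) (hp : 2 ≤ p) (C D : ℝ) (a₀ a₂ : ℝ → ℝ)
    (ha₀ : ∀ τ : ℝ, a₀ τ = ((1 - τ) / 2) ^ (p + 1) * ((1 + τ) / 2) ^ (p - 1) * C)
    (ha₂ : ∀ τ : ℝ, a₂ τ = ((1 + τ) / 2) ^ (p + 1) * ((1 - τ) / 2) ^ (p - 1) * D)
    (h₀ : ∀ τ ∈ Set.Ioo (-1 : ℝ) 1,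
      (1 + τ) * deriv a₀ τ
        + ((Real.sqrt ((p : ℝ) * ((p : ℝ) + 1))) ^ 2 * (1 + τ) / (2 * (p : ℝ)) - ((p : ℝ) - 1))
          * a₀ τ
        + ((Real.sqrt ((p : ℝ) * ((p : ℝ) + 1))) ^ 2 * (1 - τ) / (2 * (p : ℝ))) * a₂ τ = 0)
    (h₂ : ∀ τ ∈ Set.Ioo (-1 : ℝ) 1,
      (1 - τ) * deriv a₂ τ
        - ((Real.sqrt ((p : ℝ) * ((p : ℝ) + 1))) ^ 2 * (1 + τ) / (2 * (p : ℝ))) * a₀ τ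
        - ((Real.sqrt ((p : ℝ) * ((p : ℝ) + 1))) ^ 2 * (1 - τ) / (2 * (p : ℝ)) - ((p : ℝ) - 1))
          * a₂ τ = 0) :
    C = D :=
  maxwell_constants_coincide_general p hp C D a₀ a₂ ha₀ ha₂ h₀
end

section
/- For an integer p ≥ 3, the function a₀(τ) = ((1-τ)/2)^{p+2}·((1+τ)/2)^{p-2}·∫₀^τ ds/((1+s)^{p-1}(1-s)^{p+3}) satisfies the ODE (1-τ²)·a₀''(τ) + (4 + 2(p-1)τ)·a₀'(τ) + 2p·a₀(τ) = 0 on (-1,1). -/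
/-!
Reduction of order. The prefactor `w = ((1-τ)/2)^(p+2) ((1+τ)/2)^(p-2)` is the regular solution
of the Jacobi equation, and the integrand `g = 1/((1+s)^(p-1)(1-s)^(p+3))` is, up to a constant,
the Abel Wronskian `(1-τ)^(p+1)(1+τ)^(p-3)` divided by `w²`, i.e.
`(1-τ²)(2w'g + wg') + (4+2(p-1)τ)wg = 0`; hence `w ∫₀^τ g` is a second solution. Both identities
reduce, after dividing by `w` and `g`, to rational identities in the logarithmic derivatives
`w'/w = (p-2)/(1+τ) - (p+2)/(1-τ)` and `g'/g = (p+3)/(1-τ) - (p-1)/(1+τ)`.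
-/

open Set Filter Topology

theorem HasDerivAt.fun_pow_of_ne_zero {u : ℝ → ℝ} {u' x : ℝ} (hu : HasDerivAt u u' x)
    (hx : u x ≠ 0) (n : ℕ) :
    HasDerivAt (fun t => u t ^ n) (u x ^ n * (n * u' / u x)) x := by
  refine (hu.fun_pow n).congr_deriv ?_
  rcases n with _ | n
  · simp
  · rw [Nat.add_sub_cancel, pow_succ]
    field_simp

theorem ContinuousOn.hasDerivAt_intervalIntegral {E : Type*} [NormedAddCommGroup E]
    [NormedSpace ℝ E] [CompleteSpace E] {f : ℝ → E} {s : Set ℝ} {a x : ℝ}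
    (hf : ContinuousOn f s) (hs : IsOpen s) (hs' : s.OrdConnected) (ha : a ∈ s) (hx : x ∈ s) :
    HasDerivAt (fun t => ∫ u in a..t, f u) (f x) x :=
  intervalIntegral.integral_hasDerivAt_right
    ((hf.mono (hs'.uIcc_subset ha hx)).intervalIntegrable)
    (hf.stronglyMeasurableAtFilter hs x hx) (hf.continuousAt (hs.mem_nhds hx))

theorem reduction_of_order_s8 {w w' F g : ℝ → ℝ} {x P Q R w'' g' : ℝ}
    (hw : ∀ᶠ y in 𝓝 x, HasDerivAt w (w' y) y) (hw' : HasDerivAt w' w'' x)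
    (hF : ∀ᶠ y in 𝓝 x, HasDerivAt F (g y) y) (hg : HasDerivAt g g' x)
    (hsol : P * w'' + Q * w' x + R * w x = 0)
    (hg_eq : P * (2 * w' x * g x + w x * g') + Q * w x * g x = 0) :
    P * deriv (deriv fun t => w t * F t) x + Q * deriv (fun t => w t * F t) x
      + R * (w x * F x) = 0 := by
  have hderiv : deriv (fun t => w t * F t) =ᶠ[𝓝 x] fun y => w' y * F y + w y * g y := by
    filter_upwards [hw, hF] with y hwy hFy
    exact (hwy.mul hFy).deriv
  have hderiv2 : deriv (deriv fun t => w t * F t) x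
      = w'' * F x + w' x * g x + (w' x * g x + w x * g') := by
    rw [hderiv.deriv_eq]
    exact ((hw'.mul hF.self_of_nhds).add (hw.self_of_nhds.mul hg)).deriv
  rw [hderiv2, hderiv.eq_of_nhds]
  linear_combination F x * hsol + hg_eq

section JacobiFactors

variable {t : ℝ}

theorem hasDerivAt_jacobiWeight (a b : ℕ) (h₁ : 1 - t ≠ 0) (h₂ : 1 + t ≠ 0) :
    HasDerivAt (fun t => ((1 - t) / 2) ^ a * ((1 + t) / 2) ^ b)
      (((1 - t) / 2) ^ a * ((1 + t) / 2) ^ b * (b / (1 + t) - a / (1 - t))) t := by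
  have hu : HasDerivAt (fun t : ℝ => (1 - t) / 2) (-1 / 2) t := by
    simpa using ((hasDerivAt_id t).const_sub 1).div_const 2
  have hv : HasDerivAt (fun t : ℝ => (1 + t) / 2) (1 / 2) t := by
    simpa using ((hasDerivAt_id t).const_add 1).div_const 2
  refine ((hu.fun_pow_of_ne_zero (by simpa) a).mul
    (hv.fun_pow_of_ne_zero (by simpa) b)).congr_deriv ?_
  field_simp
  ring

theorem hasDerivAt_inv_jacobiWeight (c d : ℕ) (h₁ : 1 - t ≠ 0) (h₂ : 1 + t ≠ 0) :
    HasDerivAt (fun s => 1 / ((1 + s) ^ c * (1 - s) ^ d))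
      (1 / ((1 + t) ^ c * (1 - t) ^ d) * (d / (1 - t) - c / (1 + t))) t := by
  have hu : HasDerivAt (fun s : ℝ => 1 + s) 1 t := (hasDerivAt_id t).const_add 1
  have hv : HasDerivAt (fun s : ℝ => 1 - s) (-1) t := by
    simpa using (hasDerivAt_id t).const_sub 1
  have hprod := (hu.fun_pow_of_ne_zero h₂ c).fun_mul (hv.fun_pow_of_ne_zero h₁ d)
  simp only [one_div]
  refine (hprod.inv (mul_ne_zero (pow_ne_zero _ h₂) (pow_ne_zero _ h₁))).congr_deriv ?_
  field_simp
  ring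

theorem hasDerivAt_jacobiLogDeriv (a b : ℝ) (h₁ : 1 - t ≠ 0) (h₂ : 1 + t ≠ 0) :
    HasDerivAt (fun t => b / (1 + t) - a / (1 - t)) (-(b / (1 + t) ^ 2) - a / (1 - t) ^ 2) t := by
  have hu : HasDerivAt (fun s : ℝ => 1 + s) 1 t := (hasDerivAt_id t).const_add 1
  have hv : HasDerivAt (fun s : ℝ => 1 - s) (-1) t := by
    simpa using (hasDerivAt_id t).const_sub 1
  refine ((hu.inv h₂).const_mul b |>.sub ((hv.inv h₁).const_mul a)).congr_deriv ?_
  field_simp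

end JacobiFactors

theorem jacobi_logDeriv_eq (p t : ℝ) (h₁ : 1 - t ≠ 0) (h₂ : 1 + t ≠ 0) :
    (1 - t ^ 2) * (((p - 2) / (1 + t) - (p + 2) / (1 - t)) ^ 2
        + (-((p - 2) / (1 + t) ^ 2) - (p + 2) / (1 - t) ^ 2))
      + (4 + 2 * (p - 1) * t) * ((p - 2) / (1 + t) - (p + 2) / (1 - t)) + 2 * p = 0 := by
  field_simp
  ring

theorem jacobi_reductionFactor_eq (p t : ℝ) (h₁ : 1 - t ≠ 0) (h₂ : 1 + t ≠ 0) :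
    (1 - t ^ 2) * (2 * ((p - 2) / (1 + t) - (p + 2) / (1 - t))
        + ((p + 3) / (1 - t) - (p - 1) / (1 + t)))
      + (4 + 2 * (p - 1) * t) = 0 := by
  field_simp
  ring

/-- The singular branch
`a₀(τ) = ((1-τ)/2)^(p+2) ((1+τ)/2)^(p-2) ∫₀^τ ds/((1+s)^(p-1)(1-s)^(p+3))`
solves the spin-2 Jacobi equation `(1-τ²)a₀'' + (4+2(p-1)τ)a₀' + 2p a₀ = 0` on `(-1,1)`. -/
theorem jacobi_singular_branch_spin2 (p : ℕ) (hp : 3 ≤ p) :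
    ∀ τ ∈ Set.Ioo (-1 : ℝ) 1,
      (1 - τ ^ 2) *
          deriv (deriv (fun t : ℝ => ((1 - t) / 2) ^ (p + 2) * ((1 + t) / 2) ^ (p - 2) *
            ∫ s in (0 : ℝ)..t, 1 / ((1 + s) ^ (p - 1) * (1 - s) ^ (p + 3)))) τ
        + (4 + 2 * ((p : ℝ) - 1) * τ) *
          deriv (fun t : ℝ => ((1 - t) / 2) ^ (p + 2) * ((1 + t) / 2) ^ (p - 2) *
            ∫ s in (0 : ℝ)..t, 1 / ((1 + s) ^ (p - 1) * (1 - s) ^ (p + 3))) τ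
        + 2 * (p : ℝ) * (((1 - τ) / 2) ^ (p + 2) * ((1 + τ) / 2) ^ (p - 2) *
            ∫ s in (0 : ℝ)..τ, 1 / ((1 + s) ^ (p - 1) * (1 - s) ^ (p + 3))) = 0 := by
  intro τ hτ
  have hne : ∀ t ∈ Ioo (-1 : ℝ) 1, 1 - t ≠ 0 ∧ 1 + t ≠ 0 := fun t ht =>
    ⟨by linarith [ht.2], by linarith [ht.1]⟩
  have hI : ∀ᶠ t in 𝓝 τ, t ∈ Ioo (-1 : ℝ) 1 := isOpen_Ioo.mem_nhds hτ
  have hgcont : ContinuousOn (fun s : ℝ => 1 / ((1 + s) ^ (p - 1) * (1 - s) ^ (p + 3)))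
      (Ioo (-1) 1) :=
    continuousOn_const.div (by fun_prop) fun s hs =>
      mul_ne_zero (pow_ne_zero _ (hne s hs).2) (pow_ne_zero _ (hne s hs).1)
  obtain ⟨h₁, h₂⟩ := hne τ hτ
  have hcast₂ : ((p - 2 : ℕ) : ℝ) = p - 2 := by rw [Nat.cast_sub (by omega), Nat.cast_ofNat]
  have hcast₁ : ((p - 1 : ℕ) : ℝ) = p - 1 := by rw [Nat.cast_sub (by omega), Nat.cast_one]
  refine reduction_of_order_s8
    (w := fun t => ((1 - t) / 2) ^ (p + 2) * ((1 + t) / 2) ^ (p - 2))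
    (hw := hI.mono fun t ht => hasDerivAt_jacobiWeight _ _ (hne t ht).1 (hne t ht).2)
    (hw' := (hasDerivAt_jacobiWeight _ _ h₁ h₂).mul (hasDerivAt_jacobiLogDeriv _ _ h₁ h₂))
    (hF := hI.mono fun t ht => hgcont.hasDerivAt_intervalIntegral isOpen_Ioo ordConnected_Ioo
      (by norm_num) ht)
    (hg := hasDerivAt_inv_jacobiWeight _ _ h₁ h₂) ?_ ?_
  · push_cast [hcast₂]
    linear_combination ((1 - τ) / 2) ^ (p + 2) * ((1 + τ) / 2) ^ (p - 2) *
      jacobi_logDeriv_eq p τ h₁ h₂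
  · push_cast [hcast₁, hcast₂]
    linear_combination ((1 - τ) / 2) ^ (p + 2) * ((1 + τ) / 2) ^ (p - 2) *
      (1 / ((1 + τ) ^ (p - 1) * (1 - τ) ^ (p + 3))) * jacobi_reductionFactor_eq p τ h₁ h₂
end
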